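/- For any nonnegative symmetric balancing function Ŝ (Ŝ(C)=Ŝ(V∖C), Ŝ(∅)=0, Ŝ>0 on proper nonempty sets) and k ≥ 2, the optimal value of the simplex-constrained relaxation min over F ∈ ℝ_+^{n×k}, rows in Δ_k, of ∑_{l=1}^k TV(F_l)/S(F_l) equals k · min_{∅≠C⊊V} cut(C,V∖C)/Ŝ(C), given the exact single-ratio relaxation min_{f non-constant} TV(f)/S(f) = min_{∅≠C⊊V} cut(C,V∖C)/Ŝ(C). -/

import Mathlib

open Finset

/-- Lovasz extension of a set function `Sh` on `V = Fin n`. -/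
noncomputable def lovasz {n : ℕ} (Sh : Finset (Fin n) → ℝ) (f : Fin n → ℝ) : ℝ :=
  ∑ i : Fin n,
    f (Tuple.sort f i) *
      (Sh (if (i : ℕ) = 0 then Finset.univ
            else Finset.univ.filter
              (fun j => f (Tuple.sort f ⟨(i : ℕ) - 1, lt_of_le_of_lt (Nat.sub_le _ _) i.isLt⟩) < f j))
        - Sh (Finset.univ.filter (fun j => f (Tuple.sort f i) < f j)))

/-- cut(A,B) = ∑_{i∈A, j∈B} w_{ij}. -/
noncomputable def cutF {n : ℕ} (W : Matrix (Fin n) (Fin n) ℝ) (A B : Finset (Fin n)) : ℝ :=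
  ∑ i ∈ A, ∑ j ∈ B, W i j

/-- Total variation TV(f) = (1/2) ∑_{i,j} w_{ij} |f_i - f_j|. -/
noncomputable def tv {n : ℕ} (W : Matrix (Fin n) (Fin n) ℝ) (f : Fin n → ℝ) : ℝ :=
  (1 / 2) * ∑ i : Fin n, ∑ j : Fin n, W i j * |f i - f j|

/-- Indicator vector of a set. -/
noncomputable def indic {n : ℕ} (A : Finset (Fin n)) : Fin n → ℝ :=
  fun i => if i ∈ A then 1 else 0

/- Lower bound: a column with positive Lovász extension is non-constant, so by the single-ratio
result each of the `k` ratios is at least `c`. Upper bound: for an optimal cut `C`, a function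
taking the value `a` on `C` and `b ≠ a` off it has `TV = |a - b| cut(C, Cᶜ)` and Lovász extension
`|a - b| Ŝ(C)` (by symmetry of `Ŝ`), so its ratio is exactly `c`; rows at a vertex of the simplex
on `C` and at its barycentre off `C` make every column such a function. -/

theorem Fin.sum_succ_sub_castSucc {M : Type*} [AddCommGroup M] :
    ∀ {m : ℕ} (g : Fin (m + 1) → M), ∑ i : Fin m, (g i.succ - g i.castSucc) = g (last m) - g 0
  | 0, g => by simp
  | m + 1, g => by
    have h := Fin.sum_succ_sub_castSucc (g ∘ castSucc)
    simp only [Function.comp_apply, ← Fin.succ_castSucc, Fin.castSucc_zero] at h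
    rw [Fin.sum_univ_castSucc, h, Fin.succ_last]
    abel

theorem cutF_comm {n : ℕ} {W : Matrix (Fin n) (Fin n) ℝ} (hW : ∀ i j, W i j = W j i)
    (A B : Finset (Fin n)) : cutF W A B = cutF W B A :=
  sum_comm.trans (sum_congr rfl fun i _ => sum_congr rfl fun j _ => hW j i)

theorem tv_ite {n : ℕ} {W : Matrix (Fin n) (Fin n) ℝ} (hW : ∀ i j, W i j = W j i)
    (C : Finset (Fin n)) (a b : ℝ) :
    tv W (fun i => if i ∈ C then a else b) = |a - b| * cutF W C Cᶜ := by
  have hsplit (g : Fin n → ℝ) : ∑ j, g j = ∑ j ∈ C, g j + ∑ j ∈ Cᶜ, g j :=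
    (sum_add_sum_compl C g).symm
  have hout : ∀ j ∈ Cᶜ, j ∉ C := fun _ => mem_compl.1
  have hcut (A B : Finset (Fin n)) : ∑ i ∈ A, ∑ j ∈ B, W i j = cutF W A B := rfl
  simp +contextual only [tv, hsplit, hout, if_true, if_false, sub_self, abs_zero, mul_zero,
    zero_add, add_zero, ← sum_mul, hcut]
  rw [abs_sub_comm b a, cutF_comm hW Cᶜ C]
  ring

theorem lovasz_const {n : ℕ} (Sh : Finset (Fin n) → ℝ) (h : Sh univ = Sh ∅) (a : ℝ) :
    lovasz Sh (fun _ => a) = 0 := by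
  simp [lovasz, h, apply_ite Sh]

theorem lovasz_succ {m : ℕ} (Sh : Finset (Fin (m + 1)) → ℝ) (f : Fin (m + 1) → ℝ) :
    lovasz Sh f = f (Tuple.sort f 0) * (Sh univ - Sh {j | f (Tuple.sort f 0) < f j}) +
      ∑ i : Fin m, f (Tuple.sort f i.succ) *
        (Sh {j | f (Tuple.sort f i.castSucc) < f j} - Sh {j | f (Tuple.sort f i.succ) < f j}) := by
  rw [lovasz, Fin.sum_univ_succ]
  rfl

/- Sorted, the two-valued function is `b, …, b, a, …, a`; every step of the sorted sequence
contributes `a * Sh C` times its normalized jump, and the jumps telescope to `a - b`. -/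
theorem lovasz_ite_of_lt {n : ℕ} (Sh : Finset (Fin n) → ℝ) (h0 : Sh ∅ = 0) (hu : Sh univ = 0)
    {C : Finset (Fin n)} (hC : C.Nonempty) (hCc : Cᶜ.Nonempty) {a b : ℝ} (hba : b < a) :
    lovasz Sh (fun i => if i ∈ C then a else b) = (a - b) * Sh C := by
  cases n with
  | zero => exact absurd (Subsingleton.elim C ∅) hC.ne_empty
  | succ m =>
  set f : Fin (m + 1) → ℝ := fun i => if i ∈ C then a else b with hf
  set σ := Tuple.sort f
  have hmono : Monotone (f ∘ σ) := Tuple.monotone_sort f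
  have hval (j) : f j = a ∨ f j = b := by by_cases hj : j ∈ C <;> simp [hf, hj]
  have hlevel_a : ({j | a < f j} : Finset _) = ∅ := by
    ext j; rcases hval j with h | h <;> simp [h, hba.le]
  have hlevel_b : ({j | b < f j} : Finset _) = C := by
    ext j; by_cases hj : j ∈ C <;> simp [hf, hj, hba]
  have hfirst : f (σ 0) = b := by
    obtain ⟨j, hj⟩ := hCc
    have h := hmono (Fin.zero_le (σ.symm j))
    simp only [Function.comp_apply, Equiv.apply_symm_apply] at h
    rcases hval (σ 0) with h' | h'
    · simp [hf, mem_compl.1 hj] at h; linarith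
    · exact h'
  have hlast : f (σ (Fin.last m)) = a := by
    obtain ⟨j, hj⟩ := hC
    have h := hmono (Fin.le_last (σ.symm j))
    simp only [Function.comp_apply, Equiv.apply_symm_apply] at h
    rcases hval (σ (Fin.last m)) with h' | h'
    · exact h'
    · simp [hf, hj] at h; linarith
  have hstep (i : Fin m) : f (σ i.succ) *
      (Sh {j | f (σ i.castSucc) < f j} - Sh {j | f (σ i.succ) < f j}) =
      (f (σ i.succ) - f (σ i.castSucc)) * (a * Sh C / (a - b)) := by
    have hle : f (σ i.castSucc) ≤ f (σ i.succ) := hmono (Fin.castSucc_le_succ i)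
    rcases hval (σ i.castSucc) with h | h <;> rcases hval (σ i.succ) with h' | h' <;>
      rw [h, h'] at hle ⊢ <;>
      simp only [hlevel_a, hlevel_b, h0, sub_self, sub_zero, mul_zero, zero_mul]
    · linarith
    · field_simp [sub_ne_zero.2 hba.ne']
  rw [lovasz_succ, hfirst, hlevel_b, hu, sum_congr rfl fun i _ => hstep i, ← sum_mul,
    Fin.sum_succ_sub_castSucc (fun i => f (σ i)), hlast, hfirst]
  field_simp [sub_ne_zero.2 hba.ne']
  ring

theorem lovasz_ite {n : ℕ} (Sh : Finset (Fin n) → ℝ) (h0 : Sh ∅ = 0)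
    (hsym : ∀ A, Sh A = Sh Aᶜ) {C : Finset (Fin n)} (hC : C.Nonempty) (hCc : Cᶜ.Nonempty)
    {a b : ℝ} (hab : a ≠ b) :
    lovasz Sh (fun i => if i ∈ C then a else b) = |a - b| * Sh C := by
  have hu : Sh univ = 0 := by rw [← compl_empty, ← hsym, h0]
  rcases hab.lt_or_gt with hlt | hgt
  · have hflip : (fun i => if i ∈ C then a else b) = fun i => if i ∈ Cᶜ then b else a := by
      funext i; by_cases hi : i ∈ C <;> simp [hi]
    rw [hflip, lovasz_ite_of_lt Sh h0 hu hCc (by rwa [compl_compl]) hlt, ← hsym, abs_sub_comm,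
      abs_of_pos (sub_pos.2 hlt)]
  · rw [lovasz_ite_of_lt Sh h0 hu hC hCc hgt, abs_of_pos (sub_pos.2 hgt)]

theorem exists_mem_stdSimplex_forall_ne {𝕜 ι : Type*} [Field 𝕜] [LinearOrder 𝕜]
    [IsStrictOrderedRing 𝕜] [Fintype ι] [DecidableEq ι] (h : 1 < Fintype.card ι) :
    ∃ p ∈ stdSimplex 𝕜 ι, ∃ q ∈ stdSimplex 𝕜 ι, ∀ i, p i ≠ q i := by
  have hι : Nonempty ι := Fintype.card_pos_iff.1 (zero_lt_one.trans h)
  obtain ⟨i₀⟩ := id hι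
  have hcard : (1 : 𝕜) < Fintype.card ι := by exact_mod_cast h
  refine ⟨_, single_mem_stdSimplex 𝕜 i₀, _, stdSimplex.barycenter.2, fun i => ?_⟩
  rcases eq_or_ne i i₀ with rfl | hi
  · simp [hcard.ne']
  · simp [hi, (zero_lt_one.trans hcard).ne]

theorem simplex_relaxation_void_general {n k : ℕ} (hk : 2 ≤ k)
    (W : Matrix (Fin n) (Fin n) ℝ)
    (hWsym : ∀ i j, W i j = W j i)
    (Sh : Finset (Fin n) → ℝ) (h0 : Sh ∅ = 0)
    (hsym : ∀ A : Finset (Fin n), Sh A = Sh Aᶜ)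
    (hpos : ∀ C : Finset (Fin n), C.Nonempty → C ≠ Finset.univ → 0 < Sh C)
    (c : ℝ)
    (hsingle : IsLeast {r : ℝ | ∃ f : Fin n → ℝ,
        (¬ ∃ a : ℝ, ∀ i, f i = a) ∧ r = tv W f / lovasz Sh f} c)
    (hcut : IsLeast {r : ℝ | ∃ C : Finset (Fin n),
        C.Nonempty ∧ C ≠ Finset.univ ∧ r = cutF W C Cᶜ / Sh C} c) :
    IsLeast {r : ℝ | ∃ F : Fin n → Fin k → ℝ,
        (∀ i l, 0 ≤ F i l) ∧ (∀ i, ∑ l, F i l = 1) ∧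
        (∀ l, 0 < lovasz Sh (fun i => F i l)) ∧
        r = ∑ l, tv W (fun i => F i l) / lovasz Sh (fun i => F i l)}
      (k * c) := by
  obtain ⟨C, hC, hCu, hc⟩ := hcut.1
  have hCc : Cᶜ.Nonempty := by simpa [nonempty_iff_ne_empty] using hCu
  have hcol {a b : ℝ} (hab : a ≠ b) : 0 < lovasz Sh (fun i => if i ∈ C then a else b) ∧
      tv W (fun i => if i ∈ C then a else b) / lovasz Sh (fun i => if i ∈ C then a else b) = c := by
    have hgap : 0 < |a - b| := abs_pos.2 (sub_ne_zero.2 hab)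
    rw [tv_ite hWsym, lovasz_ite Sh h0 hsym hC hCc hab, mul_div_mul_left _ _ hgap.ne', hc]
    exact ⟨mul_pos hgap (hpos C hC hCu), rfl⟩
  refine ⟨?_, ?_⟩
  · obtain ⟨p, ⟨hp0, hp1⟩, q, ⟨hq0, hq1⟩, hpq⟩ :=
      exists_mem_stdSimplex_forall_ne (𝕜 := ℝ) (ι := Fin k) (by rw [Fintype.card_fin]; omega)
    refine ⟨fun i l => if i ∈ C then p l else q l, fun i l => ite_nonneg (hp0 l) (hq0 l),
      fun i => ?_, fun l => (hcol (hpq l)).1, ?_⟩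
    · by_cases hi : i ∈ C <;> simp [hi, hp1, hq1]
    · rw [sum_congr rfl fun l _ => (hcol (hpq l)).2]
      simp
  · rintro r ⟨F, -, -, hFpos, rfl⟩
    have hu : Sh univ = Sh ∅ := by rw [← compl_empty, ← hsym]
    calc (k : ℝ) * c = ∑ _l : Fin k, c := by simp
      _ ≤ _ := sum_le_sum fun l _ => hsingle.2 ⟨_, fun ⟨a, ha⟩ => (hFpos l).ne'
          ((congrArg (lovasz Sh) (funext ha)).trans (lovasz_const Sh hu a)), rfl⟩

/-- For a symmetric balancing function, the simplex-constrained relaxation has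
optimal value k times the optimal single balanced 2-cut ratio, given the exact
single-ratio relaxation result. -/
theorem simplex_relaxation_void {n k : ℕ} (hk : 2 ≤ k)
    (W : Matrix (Fin n) (Fin n) ℝ)
    (hW : ∀ i j, 0 ≤ W i j) (hWsym : ∀ i j, W i j = W j i)
    (Sh : Finset (Fin n) → ℝ) (h0 : Sh ∅ = 0) (hnn : ∀ A, 0 ≤ Sh A)
    (hsym : ∀ A : Finset (Fin n), Sh A = Sh Aᶜ)
    (hpos : ∀ C : Finset (Fin n), C.Nonempty → C ≠ Finset.univ → 0 < Sh C)
    (c : ℝ)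
    (hsingle : IsLeast {r : ℝ | ∃ f : Fin n → ℝ,
        (¬ ∃ a : ℝ, ∀ i, f i = a) ∧ r = tv W f / lovasz Sh f} c)
    (hcut : IsLeast {r : ℝ | ∃ C : Finset (Fin n),
        C.Nonempty ∧ C ≠ Finset.univ ∧ r = cutF W C Cᶜ / Sh C} c) :
    IsLeast {r : ℝ | ∃ F : Fin n → Fin k → ℝ,
        (∀ i l, 0 ≤ F i l) ∧ (∀ i, ∑ l, F i l = 1) ∧
        (∀ l, 0 < lovasz Sh (fun i => F i l)) ∧
        r = ∑ l, tv W (fun i => F i l) / lovasz Sh (fun i => F i l)}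
      (k * c) :=
  simplex_relaxation_void_general hk W hWsym Sh h0 hsym hpos c hsingle hcut
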